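/- arXiv:2604.08397 — 3 statements merged into one kernel-verified Lean document; each statement's English description precedes it below -/
import Mathlib

section
/- In the n×n grid graph with n even, if S is a set of vertices such that the induced subgraph on S contains no 4-cycle, then |S| ≤ 3(n/2)². -/
/-- The vertex set of the n×n grid: {1,…,n}². -/
def grid (n : ℕ) : Finset (ℕ × ℕ) := (Finset.Icc 1 n) ×ˢ (Finset.Icc 1 n)

/-- S contains no unit square, i.e. the induced subgraph of the grid graph on S
is 4-cycle-free. -/
def squareFree (S : Finset (ℕ × ℕ)) : Prop :=
  ∀ a b : ℕ, ¬((a, b) ∈ S ∧ (a + 1, b) ∈ S ∧ (a, b + 1) ∈ S ∧ (a + 1, b + 1) ∈ S)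

theorem stmt_0 (n : ℕ) (hn : Even n) (S : Finset (ℕ × ℕ)) (hS : S ⊆ grid n)
    (hfree : squareFree S) : S.card ≤ 3 * (n / 2) ^ 2 := by
  classical
  obtain ⟨k, hk⟩ := hn
  set f : ℕ × ℕ → ℕ × ℕ := fun p => ((p.1 - 1) / 2, (p.2 - 1) / 2) with hf
  have himg : S.image f ⊆ (Finset.range (n/2)) ×ˢ (Finset.range (n/2)) := by
    intro q hq
    simp only [Finset.mem_image] at hq
    obtain ⟨p, hp, rfl⟩ := hq
    have h := hS hp
    simp only [grid, Finset.mem_product, Finset.mem_Icc, Finset.mem_range, hf] at h ⊢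
    omega
  have hfiber : ∀ q ∈ S.image f, (S.filter fun x => f x = q).card ≤ 3 := by
    rintro ⟨i, j⟩ _
    set a := 2 * i + 1 with ha
    set b := 2 * j + 1 with hb
    set B : Finset (ℕ × ℕ) := {(a, b), (a + 1, b), (a, b + 1), (a + 1, b + 1)} with hB
    have hsub : (S.filter fun x => f x = (i, j)) ⊆ B := by
      intro p hp
      simp only [Finset.mem_filter] at hp
      have h1 := hS hp.1
      simp only [grid, Finset.mem_product, Finset.mem_Icc] at h1
      have h2 := hp.2
      simp only [hf, Prod.ext_iff] at h2
      simp only [hB, Finset.mem_insert, Finset.mem_singleton, Prod.ext_iff, ha, hb]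
      omega
    obtain ⟨q, hqB, hqS⟩ : ∃ q ∈ B, q ∉ S := by
      have h4 := hfree a b
      by_contra hc
      push_neg at hc
      exact h4 ⟨hc _ (by simp [hB]), hc _ (by simp [hB]), hc _ (by simp [hB]),
        hc _ (by simp [hB])⟩
    have hB4 : B.card ≤ 4 := by
      refine (Finset.card_insert_le _ _).trans (Nat.succ_le_succ ?_)
      refine (Finset.card_insert_le _ _).trans (Nat.succ_le_succ ?_)
      refine (Finset.card_insert_le _ _).trans (Nat.succ_le_succ ?_)
      simp
    have hsub2 : (S.filter fun x => f x = (i, j)) ⊆ B.erase q := by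
      intro p hp
      refine Finset.mem_erase.mpr ⟨?_, hsub hp⟩
      rintro rfl
      exact hqS (Finset.mem_filter.mp hp).1
    calc (S.filter fun x => f x = (i, j)).card ≤ (B.erase q).card :=
          Finset.card_le_card hsub2
      _ = B.card - 1 := Finset.card_erase_of_mem hqB
      _ ≤ 3 := by omega
  calc S.card ≤ 3 * (S.image f).card := Finset.card_le_mul_card_image _ _ hfiber
    _ ≤ 3 * ((Finset.range (n/2)) ×ˢ (Finset.range (n/2))).card :=
        Nat.mul_le_mul_left 3 (Finset.card_le_card himg)
    _ = 3 * (n / 2) ^ 2 := by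
        rw [Finset.card_product, Finset.card_range, sq]
end

section
/- For n even, the maximum size of a set S ⊆ {1,…,n}² such that no unit square {(a,b),(a+1,b),(a,b+1),(a+1,b+1)} is entirely contained in S equals 3n²/4. -/
theorem stmt_2 (n : ℕ) (hn : Even n) :
    IsGreatest {k : ℕ | ∃ S : Finset (ℕ × ℕ), S ⊆ grid n ∧ squareFree S ∧ S.card = k}
      (3 * n ^ 2 / 4) := by
  obtain ⟨m, rfl⟩ := hn
  constructor
  · -- construction: grid minus points with both coordinates even
    set E : Finset (ℕ × ℕ) :=
      ((Finset.Icc 1 m) ×ˢ (Finset.Icc 1 m)).image (fun p => (2 * p.1, 2 * p.2)) with hE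
    have hEsub : E ⊆ grid (m + m) := by
      intro p hp
      rw [hE, Finset.mem_image] at hp
      obtain ⟨q, hq, rfl⟩ := hp
      simp only [Finset.mem_product, Finset.mem_Icc] at hq
      simp only [grid, Finset.mem_product, Finset.mem_Icc]
      omega
    refine ⟨grid (m + m) \ E, Finset.sdiff_subset, ?_, ?_⟩
    · intro a b h
      obtain ⟨h1, h2, h3, h4⟩ := h
      have key : ∀ x y, (x, y) ∈ grid (m + m) \ E → ¬(Even x ∧ Even y) := by
        rintro x y hxy ⟨⟨u, hu⟩, ⟨v, hv⟩⟩
        rw [Finset.mem_sdiff] at hxy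
        obtain ⟨hg, hne⟩ := hxy
        simp only [grid, Finset.mem_product, Finset.mem_Icc] at hg
        apply hne
        rw [hE]
        refine Finset.mem_image.2 ⟨(u, v), ?_, ?_⟩
        · simp only [Finset.mem_product, Finset.mem_Icc]; omega
        · simp only [Prod.mk.injEq]; constructor <;> omega
      rcases Nat.even_or_odd a with ha | ha <;> rcases Nat.even_or_odd b with hb | hb
      · exact key a b h1 ⟨ha, hb⟩
      · exact key a (b + 1) h3 ⟨ha, hb.add_one⟩
      · exact key (a + 1) b h2 ⟨ha.add_one, hb⟩
      · exact key (a + 1) (b + 1) h4 ⟨ha.add_one, hb.add_one⟩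
    · rw [Finset.card_sdiff_of_subset hEsub]
      have hEcard : E.card = m * m := by
        rw [hE, Finset.card_image_of_injective _ (by
          intro p q hpq
          simp only [Prod.mk.injEq] at hpq
          ext <;> omega)]
        simp [Finset.card_product]
      have hgcard : (grid (m + m)).card = (m + m) * (m + m) := by
        simp [grid, Finset.card_product]
      have hsq : (m + m) ^ 2 = 4 * (m * m) := by ring
      have hsq2 : (m + m) * (m + m) = 4 * (m * m) := by ring
      rw [hEcard, hgcard]
      omega
  · -- upper bound
    rintro k ⟨S, hSg, hSf, rfl⟩
    classical
    set B : Finset (ℕ × ℕ) := (Finset.Icc 1 m) ×ˢ (Finset.Icc 1 m) with hB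
    have hmap : ∀ p ∈ S, ((p.1 + 1) / 2, (p.2 + 1) / 2) ∈ B := by
      intro p hp
      have := hSg hp
      simp only [grid, Finset.mem_product, Finset.mem_Icc] at this
      simp only [hB, Finset.mem_product, Finset.mem_Icc]
      omega
    rw [Finset.card_eq_sum_card_fiberwise hmap]
    have hfib : ∀ ij ∈ B,
        (S.filter (fun p => ((p.1 + 1) / 2, (p.2 + 1) / 2) = ij)).card ≤ 3 := by
      rintro ⟨i, j⟩ hij
      simp only [hB, Finset.mem_product, Finset.mem_Icc] at hij
      set T := S.filter (fun p => ((p.1 + 1) / 2, (p.2 + 1) / 2) = (i, j)) with hT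
      set quad : Finset (ℕ × ℕ) :=
        {(2 * i - 1, 2 * j - 1), (2 * i, 2 * j - 1), (2 * i - 1, 2 * j), (2 * i, 2 * j)}
        with hq
      have hsub : T ⊆ quad := by
        intro p hp
        rw [hT, Finset.mem_filter] at hp
        obtain ⟨-, hp2⟩ := hp
        simp only [Prod.mk.injEq] at hp2
        simp only [hq, Finset.mem_insert, Finset.mem_singleton, Prod.ext_iff]
        obtain ⟨p1, p2⟩ := p
        simp only at hp2 ⊢
        omega
      have e1 : 2 * i - 1 + 1 = 2 * i := by omega
      have e2 : 2 * j - 1 + 1 = 2 * j := by omega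
      have h4 : ¬((2 * i - 1, 2 * j - 1) ∈ S ∧ (2 * i, 2 * j - 1) ∈ S ∧
          (2 * i - 1, 2 * j) ∈ S ∧ (2 * i, 2 * j) ∈ S) := by
        have := hSf (2 * i - 1) (2 * j - 1)
        rwa [e1, e2] at this
      by_contra hc
      push_neg at hc
      have hq4 : quad.card ≤ 4 := by
        rw [hq]
        apply le_trans (Finset.card_insert_le _ _)
        apply Nat.succ_le_succ
        apply le_trans (Finset.card_insert_le _ _)
        apply Nat.succ_le_succ
        apply le_trans (Finset.card_insert_le _ _)
        simp
      have hTq : T = quad := Finset.eq_of_subset_of_card_le hsub (by omega)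
      have hmem : ∀ c ∈ quad, c ∈ S := by
        intro c hc'
        rw [← hTq, hT, Finset.mem_filter] at hc'
        exact hc'.1
      exact h4 ⟨hmem _ (by simp [hq]), hmem _ (by simp [hq]),
        hmem _ (by simp [hq]), hmem _ (by simp [hq])⟩
    calc ∑ ij ∈ B, (S.filter (fun p => ((p.1 + 1) / 2, (p.2 + 1) / 2) = ij)).card
        ≤ ∑ _ij ∈ B, 3 := Finset.sum_le_sum hfib
      _ = B.card * 3 := by rw [Finset.sum_const, smul_eq_mul]
      _ = 3 * (m + m) ^ 2 / 4 := by
          have : B.card = m * m := by simp [hB, Finset.card_product]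
          have hsq : (m + m) ^ 2 = 4 * (m * m) := by ring
          omega
end

section
/- For n even, say n = 2m, the number of sets S ⊆ {1,…,n}² with |S| = 3m² such that the induced subgraph of the n×n grid graph on S is 4-cycle-free is at most (m+1)^m · (m+1)^m = (m+1)^{2m}. -/
set_option maxRecDepth 8000

def blockF (i j : ℕ) : Finset (ℕ × ℕ) :=
  ({2*j+1, 2*j+2} : Finset ℕ) ×ˢ ({2*i+1, 2*i+2} : Finset ℕ)

def leftFull (S : Finset (ℕ × ℕ)) (i j : ℕ) : Prop :=
  (2*j+1, 2*i+1) ∈ S ∧ (2*j+1, 2*i+2) ∈ S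

def botFull (S : Finset (ℕ × ℕ)) (i j : ℕ) : Prop :=
  (2*j+1, 2*i+1) ∈ S ∧ (2*j+2, 2*i+1) ∈ S

instance (S : Finset (ℕ × ℕ)) (i j : ℕ) : Decidable (leftFull S i j) := by
  unfold leftFull; infer_instance

instance (S : Finset (ℕ × ℕ)) (i j : ℕ) : Decidable (botFull S i j) := by
  unfold botFull; infer_instance

lemma mem_blockF {p : ℕ × ℕ} {i j : ℕ} :
    p ∈ blockF i j ↔ (p.1 = 2*j+1 ∨ p.1 = 2*j+2) ∧ (p.2 = 2*i+1 ∨ p.2 = 2*i+2) := by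
  simp [blockF]

lemma blockF_eq (i j : ℕ) : blockF i j =
    {(2*j+1, 2*i+1), (2*j+2, 2*i+1), (2*j+1, 2*i+2), (2*j+2, 2*i+2)} := by
  ext p
  simp [blockF, Prod.ext_iff]
  tauto

lemma initseg (s : Finset ℕ) (h : ∀ a ∈ s, ∀ b < a, b ∈ s) : s = Finset.range s.card := by
  refine (Finset.eq_of_subset_of_card_le ?_ (by simp)).symm |>.symm
  intro a ha
  have hsub : Finset.range (a+1) ⊆ s := by
    intro b hb
    simp at hb
    rcases Nat.lt_or_eq_of_le hb with hb | rfl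
    · exact h a ha b hb
    · exact ha
  have := Finset.card_le_card hsub
  simp at this
  simpa using this

lemma card3_cases (S : Finset (ℕ × ℕ)) (i j : ℕ) (h : (S ∩ blockF i j).card = 3) :
    ((2*j+1,2*i+1) ∉ S ∧ (2*j+2,2*i+1) ∈ S ∧ (2*j+1,2*i+2) ∈ S ∧ (2*j+2,2*i+2) ∈ S) ∨
    ((2*j+1,2*i+1) ∈ S ∧ (2*j+2,2*i+1) ∉ S ∧ (2*j+1,2*i+2) ∈ S ∧ (2*j+2,2*i+2) ∈ S) ∨
    ((2*j+1,2*i+1) ∈ S ∧ (2*j+2,2*i+1) ∈ S ∧ (2*j+1,2*i+2) ∉ S ∧ (2*j+2,2*i+2) ∈ S) ∨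
    ((2*j+1,2*i+1) ∈ S ∧ (2*j+2,2*i+1) ∈ S ∧ (2*j+1,2*i+2) ∈ S ∧ (2*j+2,2*i+2) ∉ S) := by
  rw [blockF_eq] at h
  have hfilter : S ∩ ({(2*j+1, 2*i+1), (2*j+2, 2*i+1), (2*j+1, 2*i+2), (2*j+2, 2*i+2)} : Finset (ℕ×ℕ))
      = ({(2*j+1, 2*i+1), (2*j+2, 2*i+1), (2*j+1, 2*i+2), (2*j+2, 2*i+2)} : Finset (ℕ×ℕ)).filter (· ∈ S) := by
    ext p; simp [and_comm]
  rw [hfilter] at h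
  have d1 : ((2*j+1 : ℕ), (2*i+1 : ℕ)) ≠ (2*j+2, 2*i+1) := by simp [Prod.ext_iff]
  have d2 : ((2*j+1 : ℕ), (2*i+1 : ℕ)) ≠ (2*j+1, 2*i+2) := by simp [Prod.ext_iff]
  have d3 : ((2*j+1 : ℕ), (2*i+1 : ℕ)) ≠ (2*j+2, 2*i+2) := by simp [Prod.ext_iff]
  have d4 : ((2*j+2 : ℕ), (2*i+1 : ℕ)) ≠ (2*j+1, 2*i+2) := by simp [Prod.ext_iff]
  have d5 : ((2*j+2 : ℕ), (2*i+1 : ℕ)) ≠ (2*j+2, 2*i+2) := by simp [Prod.ext_iff]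
  have d6 : ((2*j+1 : ℕ), (2*i+2 : ℕ)) ≠ (2*j+2, 2*i+2) := by simp [Prod.ext_iff]
  by_cases h1 : (2*j+1,2*i+1) ∈ S <;> by_cases h2 : (2*j+2,2*i+1) ∈ S <;>
    by_cases h3 : (2*j+1,2*i+2) ∈ S <;> by_cases h4 : (2*j+2,2*i+2) ∈ S <;>
    simp_all [Finset.filter_insert, Finset.filter_singleton, Finset.card_insert_of_notMem,
      Finset.mem_insert, Finset.mem_singleton]

lemma blocks_exact3 (m : ℕ) (S : Finset (ℕ × ℕ)) (hsub : S ⊆ grid (2*m))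
    (hsf : squareFree S) (hcard : S.card = 3 * m ^ 2) :
    ∀ i < m, ∀ j < m, (S ∩ blockF i j).card = 3 := by
  have hS : S = (Finset.range m ×ˢ Finset.range m).biUnion (fun q => S ∩ blockF q.1 q.2) := by
    ext p
    simp only [Finset.mem_biUnion, Finset.mem_product, Finset.mem_range, Finset.mem_inter]
    constructor
    · intro hp
      have hg := hsub hp
      simp only [grid, Finset.mem_product, Finset.mem_Icc] at hg
      refine ⟨((p.2-1)/2, (p.1-1)/2), ⟨by omega, by omega⟩, hp, ?_⟩
      rw [mem_blockF]; omega
    · rintro ⟨q, _, hp, _⟩; exact hp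
  have hdisj : ∀ q₁ ∈ Finset.range m ×ˢ Finset.range m, ∀ q₂ ∈ Finset.range m ×ˢ Finset.range m,
      q₁ ≠ q₂ → Disjoint (S ∩ blockF q₁.1 q₁.2) (S ∩ blockF q₂.1 q₂.2) := by
    intro q₁ _ q₂ _ hne
    rw [Finset.disjoint_left]
    intro p hp₁ hp₂
    simp only [Finset.mem_inter, mem_blockF] at hp₁ hp₂
    exact hne (by ext <;> omega)
  have hle : ∀ q ∈ Finset.range m ×ˢ Finset.range m, (S ∩ blockF q.1 q.2).card ≤ 3 := by
    intro q _
    by_contra hlt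
    push_neg at hlt
    have h4 : (blockF q.1 q.2).card ≤ 4 := by
      apply le_trans (Finset.card_product _ _).le
      · exact Nat.mul_le_mul (Finset.card_insert_le _ _) (Finset.card_insert_le _ _)
    have hsub4 : S ∩ blockF q.1 q.2 ⊆ blockF q.1 q.2 := Finset.inter_subset_right
    have : (S ∩ blockF q.1 q.2).card = 4 := le_antisymm (le_trans (Finset.card_le_card hsub4) h4) hlt
    have heq : S ∩ blockF q.1 q.2 = blockF q.1 q.2 :=
      Finset.eq_of_subset_of_card_le hsub4 (by omega)
    have hall : blockF q.1 q.2 ⊆ S := by rw [← heq]; exact Finset.inter_subset_left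
    refine hsf (2*q.2+1) (2*q.1+1) ⟨hall (by rw [mem_blockF]; omega), hall (by rw [mem_blockF]; omega),
      hall (by rw [mem_blockF]; omega), hall (by rw [mem_blockF]; omega)⟩
  have hsum : ∑ q ∈ Finset.range m ×ˢ Finset.range m, (S ∩ blockF q.1 q.2).card = 3 * m ^ 2 := by
    conv_rhs => rw [← hcard, hS]
    rw [Finset.card_biUnion hdisj]
  intro i hi j hj
  by_contra hne
  have hlt : (S ∩ blockF i j).card < 3 :=
    lt_of_le_of_ne (hle (i, j) (by simp [hi, hj])) hne
  have : ∑ q ∈ Finset.range m ×ˢ Finset.range m, (S ∩ blockF q.1 q.2).card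
      < ∑ q ∈ Finset.range m ×ˢ Finset.range m, 3 := by
    apply Finset.sum_lt_sum hle
    exact ⟨(i, j), by simp [hi, hj], hlt⟩
  simp only [Finset.sum_const, smul_eq_mul, Finset.card_product, Finset.card_range] at this
  rw [hsum] at this
  have hm : m ^ 2 = m * m := sq m
  omega

lemma left_mono (S : Finset (ℕ × ℕ)) (hsf : squareFree S) (i j : ℕ)
    (h3 : (S ∩ blockF i j).card = 3) (h : leftFull S i (j+1)) : leftFull S i j := by
  by_contra hn
  have hright : (2*j+2, 2*i+1) ∈ S ∧ (2*j+2, 2*i+2) ∈ S := by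
    rcases card3_cases S i j h3 with ⟨h1,h2,h3',h4⟩|⟨h1,h2,h3',h4⟩|⟨h1,h2,h3',h4⟩|⟨h1,h2,h3',h4⟩
    · exact ⟨h2, h4⟩
    · exact absurd ⟨h1, h3'⟩ hn
    · exact ⟨h2, h4⟩
    · exact absurd ⟨h1, h3'⟩ hn
  obtain ⟨ha, hb⟩ := h
  have e1 : (2*(j+1)+1 : ℕ) = 2*j+2+1 := by ring
  rw [e1] at ha hb
  exact hsf (2*j+2) (2*i+1) ⟨hright.1, ha, hright.2, hb⟩

lemma bot_mono (S : Finset (ℕ × ℕ)) (hsf : squareFree S) (i j : ℕ)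
    (h3 : (S ∩ blockF i j).card = 3) (h : botFull S (i+1) j) : botFull S i j := by
  by_contra hn
  have htop : (2*j+1, 2*i+2) ∈ S ∧ (2*j+2, 2*i+2) ∈ S := by
    rcases card3_cases S i j h3 with ⟨h1,h2,h3',h4⟩|⟨h1,h2,h3',h4⟩|⟨h1,h2,h3',h4⟩|⟨h1,h2,h3',h4⟩
    · exact ⟨h3', h4⟩
    · exact ⟨h3', h4⟩
    · exact absurd ⟨h1, h2⟩ hn
    · exact absurd ⟨h1, h2⟩ hn
  obtain ⟨ha, hb⟩ := h
  have e1 : (2*(i+1)+1 : ℕ) = 2*i+2+1 := by ring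
  rw [e1] at ha hb
  exact hsf (2*j+1) (2*i+2) ⟨htop.1, htop.2, ha, hb⟩

lemma mem_iff_miss (S : Finset (ℕ × ℕ)) (i j : ℕ) (h3 : (S ∩ blockF i j).card = 3)
    (x y : ℕ) (hx : x = 2*j+1 ∨ x = 2*j+2) (hy : y = 2*i+1 ∨ y = 2*i+2) :
    ((x, y) ∈ S ↔ (x, y) ≠ ((if leftFull S i j then 2*j+2 else 2*j+1),
      (if botFull S i j then 2*i+2 else 2*i+1))) := by
  rcases card3_cases S i j h3 with ⟨h1,h2,h3',h4⟩|⟨h1,h2,h3',h4⟩|⟨h1,h2,h3',h4⟩|⟨h1,h2,h3',h4⟩ <;>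
    rcases hx with rfl | rfl <;> rcases hy with rfl | rfl <;>
    simp_all [leftFull, botFull, Prod.ext_iff]

lemma full_iff (m : ℕ) (S : Finset (ℕ × ℕ)) (hsub : S ⊆ grid (2*m)) (hsf : squareFree S)
    (hcard : S.card = 3 * m ^ 2) :
    (∀ i < m, ∀ j < m, (leftFull S i j ↔
        j < ((Finset.range m).filter (fun j => leftFull S i j)).card)) ∧
    (∀ i < m, ∀ j < m, (botFull S i j ↔
        i < ((Finset.range m).filter (fun i => botFull S i j)).card)) := by
  have h3 := blocks_exact3 m S hsub hsf hcard
  constructor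
  · intro i hi
    have hdesc : ∀ d b, b + d < m → leftFull S i (b + d) → leftFull S i b := by
      intro d
      induction d with
      | zero => intro b _ hl; simpa using hl
      | succ k ih =>
        intro b hm hl
        have : leftFull S i (b + k) :=
          left_mono S hsf i (b + k) (h3 i hi (b+k) (by omega)) hl
        exact ih b (by omega) this
    have hdc : ∀ a ∈ (Finset.range m).filter (fun j => leftFull S i j),
        ∀ b < a, b ∈ (Finset.range m).filter (fun j => leftFull S i j) := by
      intro a ha b hb
      simp only [Finset.mem_filter, Finset.mem_range] at ha ⊢
      have e : b + (a - b) = a := by omega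
      refine ⟨by omega, hdesc (a - b) b (by omega) (by rw [e]; exact ha.2)⟩
    have hrg := initseg _ hdc
    intro j hj
    constructor
    · intro hl
      have : j ∈ (Finset.range m).filter (fun j => leftFull S i j) := by
        simp [Finset.mem_filter, hj, hl]
      rw [hrg] at this; simpa using this
    · intro hlt
      have : j ∈ Finset.range ((Finset.range m).filter (fun j => leftFull S i j)).card := by
        simpa using hlt
      rw [← hrg] at this
      exact (Finset.mem_filter.mp this).2
  · intro i hi j hj
    have hdesc : ∀ d b, b + d < m → botFull S (b + d) j → botFull S b j := by
      intro d
      induction d with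
      | zero => intro b _ hl; simpa using hl
      | succ k ih =>
        intro b hm hl
        have : botFull S (b + k) j :=
          bot_mono S hsf (b + k) j (h3 (b+k) (by omega) j hj) hl
        exact ih b (by omega) this
    have hdc : ∀ a ∈ (Finset.range m).filter (fun i => botFull S i j),
        ∀ b < a, b ∈ (Finset.range m).filter (fun i => botFull S i j) := by
      intro a ha b hb
      simp only [Finset.mem_filter, Finset.mem_range] at ha ⊢
      have e : b + (a - b) = a := by omega
      refine ⟨by omega, hdesc (a - b) b (by omega) (by rw [e]; exact ha.2)⟩
    have hrg := initseg _ hdc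
    constructor
    · intro hl
      have : i ∈ (Finset.range m).filter (fun i => botFull S i j) := by
        simp [Finset.mem_filter, hi, hl]
      rw [hrg] at this; simpa using this
    · intro hlt
      have : i ∈ Finset.range ((Finset.range m).filter (fun i => botFull S i j)).card := by
        simpa using hlt
      rw [← hrg] at this
      exact (Finset.mem_filter.mp this).2

theorem stmt_5 (m : ℕ) :
    Set.ncard {S : Finset (ℕ × ℕ) |
        S ⊆ grid (2 * m) ∧ squareFree S ∧ S.card = 3 * m ^ 2}
      ≤ (m + 1) ^ (2 * m) := by
  classical
  set T := {S : Finset (ℕ × ℕ) | S ⊆ grid (2 * m) ∧ squareFree S ∧ S.card = 3 * m ^ 2}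
  have key : T.ncard ≤ Set.ncard (Set.univ : Set ((Fin m → Fin (m+1)) × (Fin m → Fin (m+1)))) := by
    apply Set.ncard_le_ncard_of_injOn
      (fun S => (fun i : Fin m => ⟨((Finset.range m).filter (fun j => leftFull S i j)).card,
          Nat.lt_succ_of_le (le_trans (Finset.card_filter_le _ _) (by simp))⟩,
        fun j : Fin m => ⟨((Finset.range m).filter (fun i => botFull S i j)).card,
          Nat.lt_succ_of_le (le_trans (Finset.card_filter_le _ _) (by simp))⟩))
    · intro a _; trivial
    · intro S hS S' hS' hfe
      obtain ⟨hsub, hsf, hc⟩ := hS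
      obtain ⟨hsub', hsf', hc'⟩ := hS'
      obtain ⟨hL, hB⟩ := full_iff m S hsub hsf hc
      obtain ⟨hL', hB'⟩ := full_iff m S' hsub' hsf' hc'
      have h3 := blocks_exact3 m S hsub hsf hc
      have h3' := blocks_exact3 m S' hsub' hsf' hc'
      have hcards : ∀ i : Fin m,
          ((Finset.range m).filter (fun j => leftFull S i j)).card
            = ((Finset.range m).filter (fun j => leftFull S' i j)).card := by
        intro i
        have := congrFun (congrArg Prod.fst hfe) i
        simpa using congrArg Fin.val this
      have hcardsB : ∀ j : Fin m,
          ((Finset.range m).filter (fun i => botFull S i j)).card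
            = ((Finset.range m).filter (fun i => botFull S' i j)).card := by
        intro j
        have := congrFun (congrArg Prod.snd hfe) j
        simpa using congrArg Fin.val this
      have keymem : ∀ x y : ℕ, 1 ≤ x → x ≤ 2*m → 1 ≤ y → y ≤ 2*m →
          ((x, y) ∈ S ↔ (x, y) ∈ S') := by
        intro x y hx1 hx2 hy1 hy2
        set j := (x - 1) / 2 with hjdef
        set i := (y - 1) / 2 with hidef
        have hj : j < m := by omega
        have hi : i < m := by omega
        have hx : x = 2*j+1 ∨ x = 2*j+2 := by omega
        have hy : y = 2*i+1 ∨ y = 2*i+2 := by omega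
        rw [mem_iff_miss S i j (h3 i hi j hj) x y hx hy,
          mem_iff_miss S' i j (h3' i hi j hj) x y hx hy]
        have hLiff : leftFull S i j ↔ leftFull S' i j := by
          rw [hL i hi j hj, hL' i hi j hj, hcards ⟨i, hi⟩]
        have hBiff : botFull S i j ↔ botFull S' i j := by
          rw [hB i hi j hj, hB' i hi j hj, hcardsB ⟨j, hj⟩]
        rw [if_congr hLiff rfl rfl, if_congr hBiff rfl rfl]
      ext p
      constructor
      · intro hp
        have hg := hsub hp
        simp only [grid, Finset.mem_product, Finset.mem_Icc] at hg
        exact (keymem p.1 p.2 hg.1.1 hg.1.2 hg.2.1 hg.2.2).mp hp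
      · intro hp
        have hg := hsub' hp
        simp only [grid, Finset.mem_product, Finset.mem_Icc] at hg
        exact (keymem p.1 p.2 hg.1.1 hg.1.2 hg.2.1 hg.2.2).mpr hp
  refine le_trans key ?_
  rw [Set.ncard_univ, Nat.card_eq_fintype_card]
  simp [two_mul, pow_add]
end
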